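/- Let X, Y be Polish spaces, c : X × Y → [0,∞] Borel measurable, and Γ ⊆ X × Y a Borel set on which c is finite. Fix (x₀,y₀) ∈ Γ and for n ≥ 1 define φₙ(x; x₁,y₁,…,xₙ,yₙ) = (c(x,yₙ) − c(xₙ,yₙ)) + ∑_{i=0}^{n-1} (c(x_{i+1},yᵢ) − c(xᵢ,yᵢ)). Then the function φ : X → [-∞,∞] given by φ(x) = inf{φₙ(x; x₁,y₁,…,xₙ,yₙ) : n ≥ 1, (xᵢ,yᵢ) ∈ Γ for all i} is universally measurable. -/

import Mathlib

open MeasureTheory Set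
open scoped ENNReal

noncomputable section

def UnivMeasurableSet {α : Type*} [MeasurableSpace α] (S : Set α) : Prop :=
  ∀ μ : Measure α, SigmaFinite μ → NullMeasurableSet S μ

def UnivMeasurable {α β : Type*} [MeasurableSpace α] [MeasurableSpace β] (f : α → β) : Prop :=
  ∀ B : Set β, MeasurableSet B → UnivMeasurableSet (f ⁻¹' B)

noncomputable def ruPhi {X Y : Type*} (c : X × Y → ℝ≥0∞) (Γ : Set (X × Y))
    (p₀ : X × Y) (x : X) : EReal :=
  sInf { r : EReal | ∃ (n : ℕ) (g : Fin (n + 1) → X × Y), 1 ≤ n ∧ g 0 = p₀ ∧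
    (∀ i, g i ∈ Γ) ∧
    r = ((c (x, (g (Fin.last n)).2)).toEReal - (c (g (Fin.last n))).toEReal) +
      ∑ i : Fin n, ((c ((g i.succ).1, (g i.castSucc).2)).toEReal -
        (c (g i.castSucc)).toEReal) }

/-!
For each `a`, the sublevel set `{φ < a}` is the union over `n` of the projections to `X` of the
Borel sets `{(x, g) | g 0 = p₀, g i ∈ Γ, φₙ(x; g) < a}` (with `φₙ = ruPhiChain c n`), hence
analytic. Analytic sets are universally measurable by Choquet's capacitability argument: writing
`s = f '' (ℕ → ℕ)` with `f` continuous and `μ` finite, continuity from below of the outer measure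
lets one bound the coordinates one at a time, losing a summable amount of outer measure at each
step. The compact set `f '' {x | ∀ i, x i ≤ N i}` then contains the intersection of the closures
of the finite-stage images, so it carries almost all of the outer measure of `s`.
-/

open Filter Topology

theorem iInter_closure_image_subset_image {α : Type*} [TopologicalSpace α] [T2Space α]
    {f : (ℕ → ℕ) → α} (hf : Continuous f) (N : ℕ → ℕ) :
    ⋂ k, closure (f '' {x | ∀ i < k, x i ≤ N i}) ⊆ f '' {x | ∀ i, x i ≤ N i} := by
  intro y hy
  set A : ℕ → Set (ℕ → ℕ) := fun k => {x | ∀ i < k, x i ≤ N i}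
  have hA : Antitone A := fun k l hkl x hx i hi => hx i (hi.trans_le hkl)
  have hne : (comap f (𝓝 y) ⊓ ⨅ k, 𝓟 (A k)).NeBot := by
    refine ((𝓝 y).basis_sets.comap f).inf_basis_neBot_iff
      (hasBasis_iInf_principal hA.directed_ge) |>.2 fun U hU k _ => ?_
    obtain ⟨_, hfU, x, hx, rfl⟩ := mem_closure_iff_nhds.1 (mem_iInter.1 hy k) U hU
    exact ⟨x, hfU, hx⟩
  set u := Ultrafilter.of (comap f (𝓝 y) ⊓ ⨅ k, 𝓟 (A k))
  have hu : (u : Filter (ℕ → ℕ)) ≤ comap f (𝓝 y) ⊓ ⨅ k, 𝓟 (A k) := Ultrafilter.of_le _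
  -- `u` lives on `A (i + 1)`, so its `i`-th coordinate ranges over the finite set `Iic (N i)`.
  have hcoord : ∀ i, ∃ a ∈ Iic (N i), (u.map (· i) : Filter ℕ) ≤ 𝓝 a := fun i =>
    (finite_Iic (N i)).isCompact.ultrafilter_le_nhds _ <| by
      rw [le_principal_iff, Ultrafilter.mem_coe, Ultrafilter.mem_map]
      have : A (i + 1) ∈ u := le_principal_iff.1 (hu.trans (inf_le_right.trans (iInf_le _ _)))
      exact u.mem_of_superset this fun x hx => hx i i.lt_succ_self
  choose a ha hua using hcoord
  have hlim : (u : Filter (ℕ → ℕ)) ≤ 𝓝 a := tendsto_pi_nhds.2 hua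
  exact ⟨a, ha, tendsto_nhds_unique ((hf.tendsto a).mono_left hlim)
    (tendsto_comap_iff.1 (hu.trans inf_le_left))⟩

section FiniteMeasure

variable {α : Type*} [MeasurableSpace α] {μ : Measure α} [IsFiniteMeasure μ]

theorem exists_measure_image_le_image_inter_add (f : (ℕ → ℕ) → α) (A : Set (ℕ → ℕ)) (k : ℕ)
    {δ : ℝ≥0∞} (hδ : δ ≠ 0) : ∃ m, μ (f '' A) ≤ μ (f '' (A ∩ {x | x k ≤ m})) + δ := by
  have hmono : Monotone fun m : ℕ => f '' (A ∩ {x | x k ≤ m}) := fun m m' hm =>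
    image_mono (inter_subset_inter_right _ fun x hx => le_trans hx hm)
  have hUnion : ⋃ m : ℕ, f '' (A ∩ {x | x k ≤ m}) = f '' A := by
    have hcover : ⋃ m : ℕ, {x : ℕ → ℕ | x k ≤ m} = univ :=
      iUnion_eq_univ_iff.2 fun x => ⟨x k, show x k ≤ x k from le_rfl⟩
    rw [← image_iUnion, ← inter_iUnion, hcover, inter_univ]
  have hlim := (tendsto_measure_iUnion_atTop (μ := μ) hmono).add_const δ
  rw [hUnion] at hlim
  exact (hlim.eventually (lt_mem_nhds (ENNReal.lt_add_right (measure_ne_top μ _) hδ))).exists.imp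
    fun _ => le_of_lt

theorem exists_measure_range_le_image_add (f : (ℕ → ℕ) → α) {ε : ℝ≥0∞} (hε : ε ≠ 0) :
    ∃ N : ℕ → ℕ, ∀ k, μ (range f) ≤ μ (f '' {x | ∀ i < k, x i ≤ N i}) + ε := by
  obtain ⟨δ, hδpos, hδε⟩ := ENNReal.exists_pos_sum_of_countable' hε ℕ
  choose m hm using fun A k => exists_measure_image_le_image_inter_add (μ := μ) f A k
    (hδpos k).ne'
  let A : ℕ → Set (ℕ → ℕ) := fun k => Nat.rec univ (fun k A => A ∩ {x | x k ≤ m A k}) k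
  set N : ℕ → ℕ := fun i => m (A i) i
  have hA : ∀ k, A k = {x | ∀ i < k, x i ≤ N i} := by
    intro k
    induction k with
    | zero => simp [A]
    | succ k ih =>
      ext x
      change x ∈ A k ∧ x k ≤ N k ↔ _
      rw [ih]
      exact Nat.forall_lt_succ_right.symm
  have hstep : ∀ k, μ (range f) ≤ μ (f '' A k) + ∑ i ∈ Finset.range k, δ i := by
    intro k
    induction k with
    | zero => simp [A]
    | succ k ih =>
      calc μ (range f) ≤ μ (f '' A k) + ∑ i ∈ Finset.range k, δ i := ih
        _ ≤ μ (f '' A (k + 1)) + δ k + ∑ i ∈ Finset.range k, δ i := by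
          gcongr; exact hm (A k) k
        _ = μ (f '' A (k + 1)) + ∑ i ∈ Finset.range (k + 1), δ i := by
          rw [Finset.sum_range_succ, add_assoc, add_comm (δ k)]
  refine ⟨N, fun k => ?_⟩
  calc μ (range f) ≤ μ (f '' A k) + ∑ i ∈ Finset.range k, δ i := hstep k
    _ ≤ μ (f '' A k) + ε := by gcongr; exact (ENNReal.sum_le_tsum _).trans hδε.le
    _ = _ := by rw [hA]

variable [TopologicalSpace α] [T2Space α] [OpensMeasurableSpace α] {s : Set α}

theorem MeasureTheory.AnalyticSet.exists_isCompact_subset_measure_le_add (hs : AnalyticSet s)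
    {ε : ℝ≥0∞} (hε : ε ≠ 0) :
    ∃ K ⊆ s, IsCompact K ∧ μ s ≤ μ K + ε := by
  rw [AnalyticSet] at hs
  obtain rfl | ⟨f, hf, rfl⟩ := hs
  · exact ⟨∅, empty_subset _, isCompact_empty, by simp⟩
  obtain ⟨N, hN⟩ := exists_measure_range_le_image_add (μ := μ) f hε
  have hK : IsCompact {x : ℕ → ℕ | ∀ i, x i ≤ N i} := by
    simpa [Set.pi, Iic] using isCompact_univ_pi fun i => (finite_Iic (N i)).isCompact
  refine ⟨_, image_subset_range _ _, hK.image hf, ?_⟩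
  have hanti : Antitone fun k => closure (f '' {x | ∀ i < k, x i ≤ N i}) := fun k l hkl =>
    closure_mono (image_mono fun x hx i hi => hx i (hi.trans_le hkl))
  calc μ (range f) ≤ (⨅ k, μ (closure (f '' {x | ∀ i < k, x i ≤ N i}))) + ε := by
        rw [ENNReal.iInf_add]
        exact le_iInf fun k => (hN k).trans (by gcongr; exact subset_closure)
    _ = μ (⋂ k, closure (f '' {x | ∀ i < k, x i ≤ N i})) + ε := by
        rw [hanti.measure_iInter (fun k => measurableSet_closure.nullMeasurableSet)
          ⟨0, measure_ne_top μ _⟩]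
    _ ≤ μ (f '' {x | ∀ i, x i ≤ N i}) + ε := by
        gcongr; exact iInter_closure_image_subset_image hf N

theorem MeasureTheory.AnalyticSet.nullMeasurableSet_of_isFiniteMeasure (hs : AnalyticSet s) :
    NullMeasurableSet s μ := by
  choose K hKs hK hμK using fun n : ℕ => hs.exists_isCompact_subset_measure_le_add (μ := μ)
    (ENNReal.inv_ne_zero.2 (ENNReal.natCast_ne_top n))
  have hKm : MeasurableSet (⋃ n, K n) := .iUnion fun n => (hK n).measurableSet
  have hle : μ s ≤ μ (⋃ n, K n) := by
    have hlim := (tendsto_const_nhds (x := μ (⋃ n, K n))).add ENNReal.tendsto_inv_nat_nhds_zero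
    rw [add_zero] at hlim
    exact ge_of_tendsto' hlim fun n => (hμK n).trans (by gcongr; exact subset_iUnion K n)
  exact hKm.nullMeasurableSet.congr <| ae_eq_of_subset_of_measure_ge (iUnion_subset hKs) hle
    hKm.nullMeasurableSet (measure_ne_top μ _)

end FiniteMeasure

theorem MeasureTheory.AnalyticSet.nullMeasurableSet {α : Type*} [MeasurableSpace α]
    [TopologicalSpace α] [T2Space α] [OpensMeasurableSpace α] {s : Set α} (hs : AnalyticSet s)
    (μ : Measure α) [SFinite μ] : NullMeasurableSet s μ :=
  hs.nullMeasurableSet_of_isFiniteMeasure.mono_ac (absolutelyContinuous_toFinite μ)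

theorem univMeasurable_of_analyticSet_preimage_Iio {α β : Type*} [MeasurableSpace α]
    [TopologicalSpace α] [T2Space α] [OpensMeasurableSpace α] [TopologicalSpace β]
    [MeasurableSpace β] [LinearOrder β] [OrderTopology β] [SecondCountableTopology β]
    [BorelSpace β] {f : α → β} (hf : ∀ a, AnalyticSet (f ⁻¹' Iio a)) : UnivMeasurable f :=
  fun _ hB μ _ => measurable_of_Iio (f := f) (fun a => (hf a).nullMeasurableSet μ) hB

def ruPhiChain {X Y : Type*} (c : X × Y → ℝ≥0∞) (n : ℕ) (x : X)
    (g : Fin (n + 1) → X × Y) : EReal :=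
  ((c (x, (g (Fin.last n)).2)).toEReal - (c (g (Fin.last n))).toEReal) +
    ∑ i : Fin n, ((c ((g i.succ).1, (g i.castSucc).2)).toEReal - (c (g i.castSucc)).toEReal)

theorem measurable_ruPhiChain {X Y : Type*} [MeasurableSpace X] [MeasurableSpace Y]
    {c : X × Y → ℝ≥0∞} (hc : Measurable c) (n : ℕ) :
    Measurable fun q : X × (Fin (n + 1) → X × Y) => ruPhiChain c n q.1 q.2 := by
  unfold ruPhiChain
  fun_prop

theorem measurableSet_ruPhiChain_lt {X Y : Type*} [MeasurableSpace X] [MeasurableSpace Y]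
    [MeasurableSingletonClass (X × Y)] {c : X × Y → ℝ≥0∞} (hc : Measurable c) {Γ : Set (X × Y)}
    (hΓ : MeasurableSet Γ) (p₀ : X × Y) (n : ℕ) (a : EReal) :
    MeasurableSet {q : X × (Fin (n + 1) → X × Y) | 1 ≤ n ∧ q.2 0 = p₀ ∧ (∀ i, q.2 i ∈ Γ) ∧
      ruPhiChain c n q.1 q.2 < a} := by
  simp only [ofPred_and, ofPred_forall]
  refine (MeasurableSet.const _).inter (.inter ?_ (.inter (.iInter fun i => ?_) ?_))
  · exact (measurableSet_singleton p₀).preimage (by fun_prop)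
  · exact hΓ.preimage (by fun_prop)
  · exact measurableSet_Iio.preimage (measurable_ruPhiChain hc n)

theorem ruPhi_preimage_Iio {X Y : Type*} (c : X × Y → ℝ≥0∞) (Γ : Set (X × Y)) (p₀ : X × Y)
    (a : EReal) :
    ruPhi c Γ p₀ ⁻¹' Iio a = ⋃ n : ℕ, Prod.fst ''
      {q : X × (Fin (n + 1) → X × Y) | 1 ≤ n ∧ q.2 0 = p₀ ∧ (∀ i, q.2 i ∈ Γ) ∧
        ruPhiChain c n q.1 q.2 < a} := by
  ext x
  simp only [mem_preimage, mem_Iio, ruPhi, sInf_lt_iff, mem_iUnion]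
  constructor
  · rintro ⟨_, ⟨n, g, hn, hg₀, hgΓ, rfl⟩, hlt⟩
    exact ⟨n, (x, g), ⟨hn, hg₀, hgΓ, hlt⟩, rfl⟩
  · rintro ⟨n, ⟨_, g⟩, ⟨hn, hg₀, hgΓ, hlt⟩, rfl⟩
    exact ⟨_, ⟨n, g, hn, hg₀, hgΓ, rfl⟩, hlt⟩

theorem ruPhi_univMeasurable
    {X Y : Type*} [MeasurableSpace X] [TopologicalSpace X] [PolishSpace X] [BorelSpace X]
    [MeasurableSpace Y] [TopologicalSpace Y] [PolishSpace Y] [BorelSpace Y]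
    (c : X × Y → ℝ≥0∞) (hc : Measurable c)
    (Γ : Set (X × Y)) (hΓm : MeasurableSet Γ)
    (p₀ : X × Y) :
    UnivMeasurable (ruPhi c Γ p₀) := by
  refine univMeasurable_of_analyticSet_preimage_Iio fun a => ?_
  rw [ruPhi_preimage_Iio]
  exact .iUnion fun n =>
    (measurableSet_ruPhiChain_lt hc hΓm p₀ n a).analyticSet_image measurable_fst
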